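/- Let f : ℝ^d → ℝ be differentiable and L-smooth with L > 0, let the blocks be partitioned into disjoint clusters C_0,…,C_C, and let η ∈ (0, 1/((L+1)·S·Q)]. Fix a point θ ∈ ℝ^d and, for each cluster c, a block sequence k_c^0,…,k_c^{S−1} with all blocks in C_c. For each c, let θ_c be the final iterate of Markov chain coordinate descent started at θ with step size η, block sequence (k_c^s), and Q inner updates per block (so θ_c differs from θ only on the coordinates belonging to blocks in C_c), and let θ⁺ ∈ ℝ^d be the point that agrees with θ_c on the coordinates of the blocks of cluster c, for every c. Then f(θ⁺) − f(θ) ≤ η·S·Q·C₁·(1 + η·(L+1)·S·Q·C₁)·‖∇f(θ)‖² + η·(η·(L+1)·S·Q − 1)·∑_{c=0}^{C} ∑_{s=0}^{S−1} ∑_{q=0}^{Q−1} ‖∇_{k_c^s} f(θ)‖², where C₁ := η·e·L·S·Q. -/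

import Mathlib

/-!
Run every cluster from `θ` for `N = S Q` flattened steps and let `D t` be the sum over clusters of
the displacements at step `t`. Because distinct clusters move disjoint coordinates, `θ⁺ = θ + D N`,
norms of such sums are Pythagorean, and the combined step direction at time `t` is within
`L ‖D t‖` of the direction `G t = ∑_c ∇̄_{k_c^t} f(θ)` frozen at `θ`, which satisfies
`⟪∇f(θ), G t⟫ = ‖G t‖²`. A discrete Grönwall argument with `η L N ≤ 1` gives
`‖D t‖ ≤ η N e ‖∇f(θ)‖`, so `θ⁺` is reached from `θ` by `N` such gradient-aligned steps, each
perturbed by at most `C₁ ‖∇f(θ)‖`, and the descent lemma for `L`-smooth `f` gives the bound.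
-/

/-- For a block `k` (blocks given by the assignment `blk : Fin d → K` of coordinates
to blocks), the vector `∇̄_k f(v)` agreeing with the gradient of `f` at `v` on the
coordinates of block `k` and zero elsewhere.  Note `‖maskedGrad blk f v k‖ = ‖∇_k f(v)‖`. -/
noncomputable def maskedGrad {d : ℕ} {K : Type*} [DecidableEq K]
    (blk : Fin d → K) (f : EuclideanSpace ℝ (Fin d) → ℝ)
    (v : EuclideanSpace ℝ (Fin d)) (k : K) : EuclideanSpace ℝ (Fin d) :=
  WithLp.toLp 2 (fun i => if blk i = k then gradient f v i else 0)

open RealInnerProductSpace Finset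

theorem norm_le_of_inner_eq_norm_sq {E : Type*} [NormedAddCommGroup E] [InnerProductSpace ℝ E]
    {a b : E} (h : ⟪a, b⟫ = ‖b‖ ^ 2) : ‖b‖ ≤ ‖a‖ := by
  rcases (norm_nonneg b).eq_or_lt with hb | hb
  · rw [← hb]; exact norm_nonneg a
  · have := h ▸ real_inner_le_norm a b
    nlinarith

section LipschitzGradient

variable {E : Type*} [NormedAddCommGroup E] [InnerProductSpace ℝ E] [CompleteSpace E]
  {f : E → ℝ} {L : ℝ}

theorem descent_lemma (hdiff : Differentiable ℝ f)
    (hsmooth : ∀ x y, ‖gradient f x - gradient f y‖ ≤ L * ‖x - y‖) (x y : E) :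
    f y ≤ f x + ⟪gradient f x, y - x⟫ + L / 2 * ‖y - x‖ ^ 2 := by
  set h := y - x
  let ψ : ℝ → ℝ := fun t => f (x + t • h) - t * ⟪gradient f x, h⟫ - L / 2 * t ^ 2 * ‖h‖ ^ 2
  have hψ : ∀ t, HasDerivAt ψ
      (⟪gradient f (x + t • h) - gradient f x, h⟫ - L * t * ‖h‖ ^ 2) t := by
    intro t
    have hline : HasDerivAt (fun t : ℝ => x + t • h) h t := by
      simpa using ((hasDerivAt_id t).smul_const h).const_add x
    refine ((((hdiff _).hasGradientAt.hasFDerivAt).comp_hasDerivAt t hline).sub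
      ((hasDerivAt_id t).mul_const ⟪gradient f x, h⟫)).sub
      (((hasDerivAt_pow 2 t).const_mul (L / 2)).mul_const (‖h‖ ^ 2)) |>.congr_deriv ?_
    simp only [inner_sub_left, InnerProductSpace.toDual_apply_apply, Nat.cast_ofNat]
    ring
  have hanti : AntitoneOn ψ (Set.Ici 0) := by
    refine antitoneOn_of_hasDerivWithinAt_nonpos (convex_Ici 0)
      (fun t _ => (hψ t).continuousAt.continuousWithinAt) (fun t _ => (hψ t).hasDerivWithinAt)
      fun t ht => ?_
    rw [interior_Ici] at ht
    have : ⟪gradient f (x + t • h) - gradient f x, h⟫ ≤ L * t * ‖h‖ ^ 2 := calc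
      _ ≤ ‖gradient f (x + t • h) - gradient f x‖ * ‖h‖ := real_inner_le_norm _ _
      _ ≤ L * ‖t • h‖ * ‖h‖ := by gcongr; simpa using hsmooth (x + t • h) x
      _ = L * t * ‖h‖ ^ 2 := by rw [norm_smul, Real.norm_of_nonneg ht.le]; ring
    linarith
  have := hanti (Set.mem_Ici.2 le_rfl) (Set.mem_Ici.2 zero_le_one) zero_le_one
  simp only [ψ, h, one_smul, add_sub_cancel, zero_smul, add_zero] at this
  linarith

theorem sub_le_of_perturbed_gradient_steps (hdiff : Differentiable ℝ f)
    (hsmooth : ∀ x y, ‖gradient f x - gradient f y‖ ≤ L * ‖x - y‖) (hL : 0 ≤ L)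
    {η ε : ℝ} (hη : 0 ≤ η) {N : ℕ} (x : E) (g G : ℕ → E)
    (hG : ∀ t < N, ⟪gradient f x, G t⟫ = ‖G t‖ ^ 2) (hg : ∀ t < N, ‖g t - G t‖ ≤ ε) :
    f (x - η • ∑ t ∈ range N, g t) - f x ≤
      η * N * ε * ‖gradient f x‖ + L * η ^ 2 * N ^ 2 * ε ^ 2
        + η * (L * η * N - 1) * ∑ t ∈ range N, ‖G t‖ ^ 2 := by
  set σ := ∑ t ∈ range N, ‖G t‖ ^ 2
  have hsplit : ∑ t ∈ range N, g t = ∑ t ∈ range N, G t + ∑ t ∈ range N, (g t - G t) := by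
    rw [← sum_add_distrib]; simp
  have herr : ‖∑ t ∈ range N, (g t - G t)‖ ≤ N * ε := by
    simpa using norm_sum_le_of_le (range N) fun t ht => hg t (mem_range.1 ht)
  have hmain : ‖∑ t ∈ range N, G t‖ ^ 2 ≤ N * σ := calc
    _ ≤ (∑ t ∈ range N, ‖G t‖) ^ 2 := by gcongr; exact norm_sum_le _ _
    _ ≤ N * σ := by simpa using sq_sum_le_card_mul_sum_sq (s := range N) (f := fun t => ‖G t‖)
  have hinner : σ - N * ε * ‖gradient f x‖ ≤ ⟪gradient f x, ∑ t ∈ range N, g t⟫ := by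
    rw [hsplit, inner_add_right, inner_sum, sum_congr rfl fun t ht => hG t (mem_range.1 ht)]
    have := (abs_le.1 ((abs_real_inner_le_norm (gradient f x) _).trans
      (mul_le_mul_of_nonneg_left herr (norm_nonneg _)))).1
    linarith
  have hsq : ‖∑ t ∈ range N, g t‖ ^ 2 ≤ 2 * (N * σ) + 2 * (N * ε) ^ 2 := calc
    _ ≤ (‖∑ t ∈ range N, G t‖ + ‖∑ t ∈ range N, (g t - G t)‖) ^ 2 := by
      gcongr; rw [hsplit]; exact norm_add_le _ _
    _ ≤ 2 * (‖∑ t ∈ range N, G t‖ ^ 2 + ‖∑ t ∈ range N, (g t - G t)‖ ^ 2) := add_sq_le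
    _ ≤ 2 * (N * σ) + 2 * (N * ε) ^ 2 := by
      have := pow_le_pow_left₀ (norm_nonneg _) herr 2
      linarith
  have hdesc := descent_lemma hdiff hsmooth x (x - η • ∑ t ∈ range N, g t)
  rw [sub_sub_cancel_left, inner_neg_right, norm_neg, real_inner_smul_right, norm_smul,
    Real.norm_of_nonneg hη, mul_pow] at hdesc
  have h1 := mul_le_mul_of_nonneg_left hinner hη
  have h2 := mul_le_mul_of_nonneg_left hsq (by positivity : 0 ≤ L / 2 * η ^ 2)
  linarith

end LipschitzGradient

theorem le_mul_exp_of_succ_le_one_add_mul_add {x : ℕ → ℝ} {a b : ℝ} {N : ℕ} (ha : 0 ≤ a)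
    (hb : 0 ≤ b) (hx : ∀ t, 0 ≤ x t) (h0 : x 0 = 0) (hrec : ∀ t < N, x (t + 1) ≤ (1 + a) * x t + b)
    {t : ℕ} (ht : t ≤ N) : x t ≤ t * b * Real.exp (t * a) := by
  have hrec' : ∀ n ≥ 0, x (min (n + 1) N) ≤ (1 + a) * x (min n N) + b := by
    intro n _
    rcases lt_or_ge n N with hn | hn
    · rw [min_eq_left hn, min_eq_left hn.le]; exact hrec n hn
    · rw [min_eq_right hn, min_eq_right (by omega)]; nlinarith [hx N]
  have := discrete_gronwall (u := fun n => x (min n N)) (hx _) hrec' (fun _ _ => ha)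
    (fun _ _ => hb) (Nat.zero_le t)
  simpa [min_eq_left ht, h0, mul_comm] using this

section ClusterSupport

variable {d : ℕ} {ι : Type*} [Fintype ι] (p : Fin d → ι) {x : ι → EuclideanSpace ℝ (Fin d)}

theorem sum_apply_of_support (hx : ∀ c i, p i ≠ c → x c i = 0) (i : Fin d) :
    (∑ c, x c) i = x (p i) i := by
  rw [WithLp.ofLp_sum, Finset.sum_apply]
  exact sum_eq_single _ (fun c _ hc => hx c i hc.symm) (by simp)

theorem norm_sq_sum_of_support (hx : ∀ c i, p i ≠ c → x c i = 0) :
    ‖∑ c, x c‖ ^ 2 = ∑ c, ‖x c‖ ^ 2 := by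
  rw [EuclideanSpace.norm_sq_eq]
  simp only [sum_apply_of_support p hx, EuclideanSpace.norm_sq_eq]
  rw [sum_comm]
  refine sum_congr rfl fun i _ => (sum_eq_single (f := fun c => ‖x c i‖ ^ 2) (p i)
    (fun c _ hc => ?_) (absurd (mem_univ _))).symm
  simp [hx c i hc.symm]

end ClusterSupport

section MaskedGradient

variable {d : ℕ} {K : Type*} [DecidableEq K] (blk : Fin d → K) (f : EuclideanSpace ℝ (Fin d) → ℝ)

theorem maskedGrad_apply_of_ne {v : EuclideanSpace ℝ (Fin d)} {k : K} {i : Fin d}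
    (h : blk i ≠ k) : maskedGrad blk f v k i = 0 := by
  simp [maskedGrad, h]

theorem inner_gradient_maskedGrad (v : EuclideanSpace ℝ (Fin d)) (k : K) :
    ⟪gradient f v, maskedGrad blk f v k⟫ = ‖maskedGrad blk f v k‖ ^ 2 := by
  rw [← real_inner_self_eq_norm_sq, PiLp.inner_apply, PiLp.inner_apply]
  refine sum_congr rfl fun i _ => ?_
  simp only [maskedGrad, PiLp.toLp_apply, RCLike.inner_apply, conj_trivial]
  split_ifs <;> ring

theorem norm_maskedGrad_sub_le (x y : EuclideanSpace ℝ (Fin d)) (k : K) :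
    ‖maskedGrad blk f x k - maskedGrad blk f y k‖ ≤ ‖gradient f x - gradient f y‖ := by
  simp only [EuclideanSpace.norm_eq]
  gcongr with i
  simp only [maskedGrad, PiLp.sub_apply]
  split_ifs <;> simp

end MaskedGradient

section ClusterBlocks

variable {d : ℕ} {K ι : Type*} [DecidableEq K] {blk : Fin d → K} {cl : K → ι}
  {f : EuclideanSpace ℝ (Fin d) → ℝ} {k : ι → K}

theorem maskedGrad_apply_of_cluster_ne (hk : ∀ c, cl (k c) = c) (v : EuclideanSpace ℝ (Fin d))
    {c : ι} {i : Fin d} (hi : cl (blk i) ≠ c) : maskedGrad blk f v (k c) i = 0 :=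
  maskedGrad_apply_of_ne blk f fun h => hi (h ▸ hk c)

variable [Fintype ι]

theorem norm_sq_sum_maskedGrad (hk : ∀ c, cl (k c) = c) (v : EuclideanSpace ℝ (Fin d)) :
    ‖∑ c, maskedGrad blk f v (k c)‖ ^ 2 = ∑ c, ‖maskedGrad blk f v (k c)‖ ^ 2 :=
  norm_sq_sum_of_support (cl ∘ blk) fun _ _ => maskedGrad_apply_of_cluster_ne hk v

theorem inner_gradient_sum_maskedGrad (hk : ∀ c, cl (k c) = c) (v : EuclideanSpace ℝ (Fin d)) :
    ⟪gradient f v, ∑ c, maskedGrad blk f v (k c)⟫ = ‖∑ c, maskedGrad blk f v (k c)‖ ^ 2 := by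
  rw [norm_sq_sum_maskedGrad hk, inner_sum]
  exact sum_congr rfl fun c _ => inner_gradient_maskedGrad blk f v (k c)

theorem norm_sum_maskedGrad_sub_le {L : ℝ} (hL : 0 ≤ L)
    (hsmooth : ∀ x y, ‖gradient f x - gradient f y‖ ≤ L * ‖x - y‖) (hk : ∀ c, cl (k c) = c)
    {x : ι → EuclideanSpace ℝ (Fin d)} {y : EuclideanSpace ℝ (Fin d)}
    (hx : ∀ c i, cl (blk i) ≠ c → x c i = y i) :
    ‖∑ c, maskedGrad blk f (x c) (k c) - ∑ c, maskedGrad blk f y (k c)‖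
      ≤ L * ‖∑ c, (x c - y)‖ := by
  rw [← sum_sub_distrib]
  refine (pow_le_pow_iff_left₀ (norm_nonneg _) (by positivity) two_ne_zero).1 ?_
  rw [mul_pow, norm_sq_sum_of_support (cl ∘ blk), norm_sq_sum_of_support (cl ∘ blk), mul_sum]
  · gcongr with c
    rw [← mul_pow]
    gcongr
    exact (norm_maskedGrad_sub_le blk f _ _ _).trans (hsmooth _ _)
  · intro c i hi
    simp [hx c i hi]
  · intro c i hi
    simp [maskedGrad_apply_of_cluster_ne hk _ hi]

end ClusterBlocks

structure IsClusterDescent {d : ℕ} {K ι : Type*} [DecidableEq K] (blk : Fin d → K)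
    (cl : K → ι) (f : EuclideanSpace ℝ (Fin d) → ℝ) (η : ℝ) (θ : EuclideanSpace ℝ (Fin d))
    (N : ℕ) (k : ι → ℕ → K) (u : ι → ℕ → EuclideanSpace ℝ (Fin d)) : Prop where
  init : ∀ c, u c 0 = θ
  cluster : ∀ c, ∀ t < N, cl (k c t) = c
  step : ∀ c, ∀ t < N, u c (t + 1) = u c t - η • maskedGrad blk f (u c t) (k c t)

namespace IsClusterDescent

variable {d : ℕ} {K ι : Type*} [DecidableEq K] {blk : Fin d → K} {cl : K → ι}
  {f : EuclideanSpace ℝ (Fin d) → ℝ} {η : ℝ} {θ : EuclideanSpace ℝ (Fin d)} {N : ℕ}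
  {k : ι → ℕ → K} {u : ι → ℕ → EuclideanSpace ℝ (Fin d)}

theorem apply_eq_of_cluster_ne (h : IsClusterDescent blk cl f η θ N k u) {c : ι} {t : ℕ}
    (ht : t ≤ N) {i : Fin d} (hi : cl (blk i) ≠ c) : u c t i = θ i := by
  induction t with
  | zero => rw [h.init]
  | succ t ih =>
    rw [h.step c t ht, PiLp.sub_apply, PiLp.smul_apply,
      maskedGrad_apply_of_ne blk f fun hb => hi (hb ▸ h.cluster c t ht), smul_zero, sub_zero,
      ih (Nat.le_of_succ_le ht)]

variable [Fintype ι]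

theorem sum_sub_succ (h : IsClusterDescent blk cl f η θ N k u) {t : ℕ} (ht : t < N) :
    ∑ c, (u c (t + 1) - θ) = ∑ c, (u c t - θ) - η • ∑ c, maskedGrad blk f (u c t) (k c t) := by
  rw [smul_sum, ← sum_sub_distrib]
  refine sum_congr rfl fun c _ => ?_
  rw [h.step c t ht]
  abel

theorem norm_sum_sub_le (h : IsClusterDescent blk cl f η θ N k u) {L : ℝ} (hL : 0 ≤ L)
    (hsmooth : ∀ x y, ‖gradient f x - gradient f y‖ ≤ L * ‖x - y‖) (hη : 0 ≤ η)
    (hηLN : η * L * N ≤ 1) {t : ℕ} (ht : t ≤ N) :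
    ‖∑ c, (u c t - θ)‖ ≤ η * N * Real.exp 1 * ‖gradient f θ‖ := by
  have hrec : ∀ t < N, ‖∑ c, (u c (t + 1) - θ)‖
      ≤ (1 + η * L) * ‖∑ c, (u c t - θ)‖ + η * ‖gradient f θ‖ := by
    intro t ht
    have hk : ∀ c, cl (k c t) = c := fun c => h.cluster c t ht
    have hG := norm_le_of_inner_eq_norm_sq
      (inner_gradient_sum_maskedGrad (blk := blk) (f := f) hk θ)
    have herr := norm_sum_maskedGrad_sub_le hL hsmooth hk
      fun c i hi => h.apply_eq_of_cluster_ne ht.le hi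
    rw [h.sum_sub_succ ht, ← sub_add_cancel (∑ c, maskedGrad blk f (u c t) (k c t))
      (∑ c, maskedGrad blk f θ (k c t))]
    calc _ ≤ ‖∑ c, (u c t - θ)‖ + η * (‖∑ c, maskedGrad blk f (u c t) (k c t)
            - ∑ c, maskedGrad blk f θ (k c t)‖ + ‖∑ c, maskedGrad blk f θ (k c t)‖) := by
          refine (norm_sub_le _ _).trans ?_
          rw [norm_smul, Real.norm_of_nonneg hη]
          gcongr
          exact norm_add_le _ _
      _ ≤ _ := by nlinarith
  have hgron := le_mul_exp_of_succ_le_one_add_mul_add (x := fun t => ‖∑ c, (u c t - θ)‖)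
    (by positivity) (by positivity) (fun _ => norm_nonneg _) (by simp [h.init]) hrec ht
  have htN : (t : ℝ) ≤ N := by exact_mod_cast ht
  calc _ ≤ t * (η * ‖gradient f θ‖) * Real.exp (t * (η * L)) := hgron
    _ ≤ N * (η * ‖gradient f θ‖) * Real.exp 1 := by
      gcongr
      nlinarith [mul_le_mul_of_nonneg_right htN (mul_nonneg hη hL)]
    _ = _ := by ring

theorem sum_sub_eq_neg_smul_sum (h : IsClusterDescent blk cl f η θ N k u) {t : ℕ} (ht : t ≤ N) :
    ∑ c, (u c t - θ) = -(η • ∑ s ∈ range t, ∑ c, maskedGrad blk f (u c s) (k c s)) := by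
  induction t with
  | zero => simp [h.init]
  | succ t ih =>
    rw [h.sum_sub_succ ht, ih (Nat.le_of_succ_le ht), sum_range_succ, smul_add]
    abel

theorem eq_sub_smul_sum (h : IsClusterDescent blk cl f η θ N k u)
    {θplus : EuclideanSpace ℝ (Fin d)} (hθplus : ∀ i, θplus i = u (cl (blk i)) N i) :
    θplus = θ - η • ∑ t ∈ range N, ∑ c, maskedGrad blk f (u c t) (k c t) := by
  rw [sub_eq_add_neg, ← h.sum_sub_eq_neg_smul_sum le_rfl]
  ext i
  rw [hθplus, PiLp.add_apply, sum_apply_of_support (cl ∘ blk)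
    fun c i hi => by rw [PiLp.sub_apply, h.apply_eq_of_cluster_ne le_rfl hi, sub_self]]
  simp

theorem sub_le (h : IsClusterDescent blk cl f η θ N k u) {L : ℝ} (hL : 0 ≤ L)
    (hdiff : Differentiable ℝ f)
    (hsmooth : ∀ x y, ‖gradient f x - gradient f y‖ ≤ L * ‖x - y‖) (hη : 0 ≤ η)
    (hηLN : η * L * N ≤ 1) {θplus : EuclideanSpace ℝ (Fin d)}
    (hθplus : ∀ i, θplus i = u (cl (blk i)) N i) {C₁ : ℝ} (hC₁ : C₁ = η * Real.exp 1 * L * N) :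
    f θplus - f θ ≤ η * N * C₁ * (1 + η * L * N * C₁) * ‖gradient f θ‖ ^ 2
      + η * (η * L * N - 1) * ∑ c, ∑ t ∈ range N, ‖maskedGrad blk f θ (k c t)‖ ^ 2 := by
  have hk : ∀ t < N, ∀ c, cl (k c t) = c := fun t ht c => h.cluster c t ht
  have hsteps := sub_le_of_perturbed_gradient_steps hdiff hsmooth hL hη θ
    (fun t => ∑ c, maskedGrad blk f (u c t) (k c t)) (fun t => ∑ c, maskedGrad blk f θ (k c t))
    (fun t ht => inner_gradient_sum_maskedGrad (hk t ht) θ) (ε := C₁ * ‖gradient f θ‖)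
    fun t ht => calc
      _ ≤ L * ‖∑ c, (u c t - θ)‖ := norm_sum_maskedGrad_sub_le hL hsmooth (hk t ht)
          fun c i hi => h.apply_eq_of_cluster_ne ht.le hi
      _ ≤ L * (η * N * Real.exp 1 * ‖gradient f θ‖) := by
          gcongr; exact h.norm_sum_sub_le hL hsmooth hη hηLN ht.le
      _ = C₁ * ‖gradient f θ‖ := by rw [hC₁]; ring
  have hσ : ∑ t ∈ range N, ‖∑ c, maskedGrad blk f θ (k c t)‖ ^ 2
      = ∑ c, ∑ t ∈ range N, ‖maskedGrad blk f θ (k c t)‖ ^ 2 := by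
    rw [sum_comm]
    exact sum_congr rfl fun t ht => norm_sq_sum_maskedGrad (hk t (mem_range.1 ht)) θ
  rw [← h.eq_sub_smul_sum hθplus, hσ] at hsteps
  exact hsteps.trans_eq (by ring)

end IsClusterDescent

theorem apply_succ_div_mod {α : Type*} {S Q : ℕ} (hQ : 0 < Q) {v : ℕ → ℕ → α}
    {F : ℕ → α → α} (hq : ∀ s < S, ∀ q < Q, v s (q + 1) = F s (v s q))
    (hs : ∀ s < S, v (s + 1) 0 = v s Q) {t : ℕ} (ht : t < S * Q) :
    v ((t + 1) / Q) ((t + 1) % Q) = F (t / Q) (v (t / Q) (t % Q)) := by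
  have hsS : t / Q < S := (Nat.div_lt_iff_lt_mul hQ).2 ht
  have hdm := Nat.div_add_mod t Q
  rcases Nat.lt_or_eq_of_le (show t % Q + 1 ≤ Q from Nat.mod_lt t hQ) with hlt | heq
  · have hsucc : t + 1 = Q * (t / Q) + (t % Q + 1) := by omega
    rw [hsucc, Nat.mul_add_div hQ, Nat.div_eq_of_lt hlt, add_zero, Nat.mul_add_mod,
      Nat.mod_eq_of_lt hlt, hq _ hsS _ (Nat.mod_lt t hQ)]
  · have hsucc : t + 1 = Q * (t / Q + 1) := by rw [Nat.mul_add_one]; omega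
    rw [hsucc, Nat.mul_div_cancel_left _ hQ, Nat.mul_mod_right, hs _ hsS,
      ← hq _ hsS _ (Nat.mod_lt t hQ), heq]

theorem sum_range_mul_div {M : Type*} [AddCommMonoid M] {Q : ℕ} (hQ : 0 < Q) (S : ℕ)
    (F : ℕ → M) : ∑ t ∈ range (S * Q), F (t / Q) = ∑ s ∈ range S, ∑ _q ∈ range Q, F s := by
  induction S with
  | zero => simp
  | succ S ih =>
    rw [sum_range_succ, ← ih, Nat.succ_mul, sum_range_add]
    congr 1
    refine sum_congr rfl fun q hq => ?_
    rw [add_comm, Nat.add_mul_div_right _ _ hQ, Nat.div_eq_of_lt (mem_range.1 hq), zero_add]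

theorem mtcd_token_per_cluster_descent_bound_general
    {d : ℕ} {K : Type*} [DecidableEq K]
    (blk : Fin d → K) (C : ℕ) (cl : K → Fin (C + 1))
    (f : EuclideanSpace ℝ (Fin d) → ℝ) (L : ℝ) (hL : 0 < L)
    (hdiff : Differentiable ℝ f)
    (hsmooth : ∀ x y : EuclideanSpace ℝ (Fin d),
      ‖gradient f x - gradient f y‖ ≤ L * ‖x - y‖)
    (S Q : ℕ) (hQ : 1 ≤ Q)
    (η : ℝ) (hη : 0 < η) (hηub : η ≤ 1 / ((L + 1) * S * Q))
    (θ : EuclideanSpace ℝ (Fin d))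
    (kc : Fin (C + 1) → ℕ → K) (hkc : ∀ c, ∀ s < S, cl (kc c s) = c)
    (v : Fin (C + 1) → ℕ → ℕ → EuclideanSpace ℝ (Fin d))
    (hinit : ∀ c, v c 0 0 = θ)
    (hrecq : ∀ c, ∀ s < S, ∀ q < Q,
      v c s (q + 1) = v c s q - η • maskedGrad blk f (v c s q) (kc c s))
    (hrecs : ∀ c, ∀ s < S, v c (s + 1) 0 = v c s Q)
    (θplus : EuclideanSpace ℝ (Fin d))
    (hθplus : ∀ i : Fin d, θplus i = v (cl (blk i)) S 0 i)
    (C₁ : ℝ) (hC₁ : C₁ = η * Real.exp 1 * L * S * Q) :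
    f θplus - f θ
      ≤ η * S * Q * C₁ * (1 + η * (L + 1) * S * Q * C₁) * ‖gradient f θ‖ ^ 2
        + η * (η * (L + 1) * S * Q - 1) *
            ∑ c : Fin (C + 1), ∑ s ∈ Finset.range S, ∑ q ∈ Finset.range Q,
              ‖maskedGrad blk f θ (kc c s)‖ ^ 2 := by
  have hrun : IsClusterDescent blk cl f η θ (S * Q) (fun c t => kc c (t / Q))
      (fun c t => v c (t / Q) (t % Q)) :=
    { init := fun c => by simpa using hinit c
      cluster := fun c t ht => hkc c _ ((Nat.div_lt_iff_lt_mul hQ).2 ht)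
      step := fun c t ht => apply_succ_div_mod hQ
        (F := fun s x => x - η • maskedGrad blk f x (kc c s)) (hrecq c) (hrecs c) ht }
  have hθplus_flat : ∀ i, θplus i = v (cl (blk i)) (S * Q / Q) (S * Q % Q) i := by
    simpa [Nat.mul_div_cancel _ hQ] using hθplus
  have hηN : η * ((L + 1) * S * Q) ≤ 1 := mul_le_of_le_div₀ zero_le_one (by positivity) hηub
  have hC₁0 : 0 ≤ C₁ := by rw [hC₁]; positivity
  have hbound := hrun.sub_le hL.le hdiff hsmooth hη.le (by push_cast; nlinarith) hθplus_flat
    (hC₁.trans (by push_cast; ring))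
  rw [sum_congr rfl fun c _ => sum_range_mul_div hQ S fun s => ‖maskedGrad blk f θ (kc c s)‖ ^ 2]
    at hbound
  calc f θplus - f θ ≤ _ := hbound
    _ ≤ η * (S * Q : ℕ) * C₁ * (1 + η * (L + 1) * (S * Q : ℕ) * C₁) * ‖gradient f θ‖ ^ 2
        + η * (η * (L + 1) * (S * Q : ℕ) - 1) * ∑ c : Fin (C + 1), ∑ s ∈ Finset.range S,
          ∑ _q ∈ Finset.range Q, ‖maskedGrad blk f θ (kc c s)‖ ^ 2 := by
      gcongr <;> linarith
    _ = _ := by push_cast; ring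

/-- **Descent bound for parallel disjoint (token-per-cluster) Markov chain coordinate
descent.** The blocks `K` are partitioned into clusters `C_0,…,C_C` via `cl : K → Fin (C+1)`;
for each cluster `c` a coordinate-descent run starts from `θ`, uses a block sequence lying in
cluster `c`, and produces a final iterate `v c S 0`; the combined point `θ⁺` takes, on the
coordinates of the blocks of cluster `c`, the values of cluster `c`'s final iterate.  Then
`f(θ⁺) − f(θ) ≤ η S Q C₁ (1 + η(L+1)SQC₁)‖∇f(θ)‖²
  + η(η(L+1)SQ − 1) ∑_c ∑_{s<S} ∑_{q<Q} ‖∇_{k_c^s} f(θ)‖²` with `C₁ = η e L S Q`. -/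
theorem mtcd_token_per_cluster_descent_bound
    {d : ℕ} (hd : 1 ≤ d) {K : Type*} [Fintype K] [DecidableEq K]
    (blk : Fin d → K) (C : ℕ) (cl : K → Fin (C + 1))
    (f : EuclideanSpace ℝ (Fin d) → ℝ) (L : ℝ) (hL : 0 < L)
    (hdiff : Differentiable ℝ f)
    (hsmooth : ∀ x y : EuclideanSpace ℝ (Fin d),
      ‖gradient f x - gradient f y‖ ≤ L * ‖x - y‖)
    (S Q : ℕ) (hS : 1 ≤ S) (hQ : 1 ≤ Q)
    (η : ℝ) (hη : 0 < η) (hηub : η ≤ 1 / ((L + 1) * S * Q))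
    (θ : EuclideanSpace ℝ (Fin d))
    (kc : Fin (C + 1) → ℕ → K) (hkc : ∀ c, ∀ s < S, cl (kc c s) = c)
    (v : Fin (C + 1) → ℕ → ℕ → EuclideanSpace ℝ (Fin d))
    (hinit : ∀ c, v c 0 0 = θ)
    (hrecq : ∀ c, ∀ s < S, ∀ q < Q,
      v c s (q + 1) = v c s q - η • maskedGrad blk f (v c s q) (kc c s))
    (hrecs : ∀ c, ∀ s < S, v c (s + 1) 0 = v c s Q)
    (θplus : EuclideanSpace ℝ (Fin d))
    (hθplus : ∀ i : Fin d, θplus i = v (cl (blk i)) S 0 i)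
    (C₁ : ℝ) (hC₁ : C₁ = η * Real.exp 1 * L * S * Q) :
    f θplus - f θ
      ≤ η * S * Q * C₁ * (1 + η * (L + 1) * S * Q * C₁) * ‖gradient f θ‖ ^ 2
        + η * (η * (L + 1) * S * Q - 1) *
            ∑ c : Fin (C + 1), ∑ s ∈ Finset.range S, ∑ q ∈ Finset.range Q,
              ‖maskedGrad blk f θ (kc c s)‖ ^ 2 :=
  mtcd_token_per_cluster_descent_bound_general blk C cl f L hL hdiff hsmooth S Q hQ η hη hηub θ kc
    hkc v hinit hrecq hrecs θplus hθplus C₁ hC₁
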